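/- Let φ(θ; x) = ∑_{k≥1} (x^k/k!) ∏_{a=1}^{k-1}(kθ - a) be a formal power series in x. Then exp(φ(θ; x)) - x·exp(θ·φ(θ; x)) = 1 as formal power series in x over ℚ[θ]. -/

import Mathlib

open PowerSeries Finset

/-- Formal exponential of a power series (intended for series with zero constant term). -/
noncomputable def expPS {R : Type*} [CommRing R] [Algebra ℚ R] (f : PowerSeries R) :
    PowerSeries R :=
  PowerSeries.mk fun n =>
    ∑ j ∈ Finset.range (n + 1), ((1 : ℚ) / j.factorial) • (PowerSeries.coeff (R := R) n (f ^ j))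

/-- `φ(θ; x) = ∑_{k≥1} (x^k/k!) ∏_{a=1}^{k-1} (kθ - a)`, a power series in `x`
with coefficients in `ℚ[θ]` (`θ = Polynomial.X`). -/
noncomputable def phiT : PowerSeries (Polynomial ℚ) :=
  PowerSeries.mk fun k =>
    if k = 0 then 0 else
      Polynomial.C ((1 : ℚ) / k.factorial) *
        ∏ a ∈ Finset.range (k - 1),
          ((k : Polynomial ℚ) * Polynomial.X - ((a : Polynomial ℚ) + 1))

/-!
Write `A_n(c) = c/(c+nθ) · binom(c+nθ, n)`. Both `exp(cφ)` and `∑ A_n(c) xⁿ` solve `F' = c φ' F`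
with `F(0) = 1`: for the first this is the chain rule, for the second it is the Rothe–Hagen
convolution `∑_k A_k(c) binom(y+(n-k)θ, n-k) = binom(c+y+nθ, n)` at `y = θ - 1`, because
`φ' = ∑ binom(θ-1+nθ, n) xⁿ`. Hence `[xⁿ] exp(cφ) = A_n(c)`, and the relation reduces to
`A_{n+1}(1) = A_n(θ)`, both sides being `binom((n+1)θ, n)/(n+1)`.
-/

theorem Ring.factorial_nsmul_choose_eq_prod {R : Type*} [CommRing R] [BinomialRing R] (r : R)
    (n : ℕ) : n.factorial • Ring.choose r n = ∏ j ∈ range n, (r - j) := by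
  rw [← Ring.descPochhammer_eq_factorial_smul_choose, ← descPochhammer_eval_eq_prod_range,
    ← descPochhammer_map (Int.castRingHom R), Polynomial.eval_map, ← Polynomial.aeval_eq_smeval]
  rfl

section GenBinom

variable {R : Type*} [CommRing R] [BinomialRing R]

noncomputable def genBinom (z x : R) (m : ℕ) : R := Ring.choose (x + m * z) m

/-- `rotheCoeff z x k = x/(x+kz) · binom(x+kz, k)`, written without division as
`binom(x+kz, k) - z · binom(x+kz-1, k-1)`. -/
noncomputable def rotheCoeff (z x : R) : ℕ → R
  | 0 => 1
  | k + 1 => genBinom z x (k + 1) - z * genBinom z (x + z - 1) k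

variable (z x : R)

@[simp] theorem genBinom_zero_right : genBinom z x 0 = 1 := Ring.choose_zero_right _

@[simp] theorem rotheCoeff_zero_right : rotheCoeff z x 0 = 1 := rfl

theorem rotheCoeff_succ (k : ℕ) :
    rotheCoeff z x (k + 1) = genBinom z x (k + 1) - z * genBinom z (x + z - 1) k := rfl

theorem genBinom_add_one_sub (m : ℕ) :
    genBinom z (x + 1) (m + 1) - genBinom z x (m + 1) = genBinom z (x + z) m := by
  have := Ring.choose_succ_succ (x + (m + 1 : ℕ) * z) m
  simp only [genBinom]
  rw [show x + 1 + ((m + 1 : ℕ) : R) * z = x + (m + 1 : ℕ) * z + 1 by ring, this,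
    show x + z + m * z = x + (m + 1 : ℕ) * z by push_cast; ring]
  ring

theorem rotheCoeff_add_one_sub (k : ℕ) :
    rotheCoeff z (x + 1) (k + 1) - rotheCoeff z x (k + 1) = rotheCoeff z (x + z) k := by
  have hshift := genBinom_add_one_sub z (x + z - 1)
  rw [sub_add_cancel] at hshift
  rw [rotheCoeff_succ, rotheCoeff_succ, show x + 1 + z - 1 = x + z by ring]
  cases k with
  | zero => simpa using genBinom_add_one_sub z x 0
  | succ j =>
    rw [rotheCoeff_succ, show x + z + z - 1 = x + z - 1 + z by ring, ← hshift,
      ← genBinom_add_one_sub z x]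
    ring

theorem succ_smul_genBinom_succ (m : ℕ) :
    (m + 1) • genBinom z x (m + 1) = (x + (m + 1 : ℕ) * z) * genBinom z (x + z - 1) m := by
  have := Ring.choose_smul_choose (x + (m + 1 : ℕ) * z) (Nat.le_add_left 1 m)
  rw [Nat.choose_one_right, Ring.choose_one_right, Nat.cast_one, Nat.add_sub_cancel] at this
  rw [genBinom, genBinom, this,
    show x + (m + 1 : ℕ) * z - 1 = x + z - 1 + m * z by push_cast; ring]

theorem succ_smul_rotheCoeff_succ (k : ℕ) :
    (k + 1) • rotheCoeff z x (k + 1) = x * genBinom z (x + z - 1) k := by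
  rw [rotheCoeff_succ, smul_sub, succ_smul_genBinom_succ, nsmul_eq_mul]
  push_cast
  ring

attribute [local instance] BinomialRing.toIsAddTorsionFree

theorem rotheCoeff_zero_succ (k : ℕ) : rotheCoeff z 0 (k + 1) = 0 := by
  rw [← nsmul_right_inj k.add_one_ne_zero, succ_smul_rotheCoeff_succ, zero_mul,
    smul_zero]

theorem rotheCoeff_one_succ (n : ℕ) : rotheCoeff z 1 (n + 1) = rotheCoeff z z n := by
  rw [← nsmul_right_inj n.add_one_ne_zero, succ_smul_rotheCoeff_succ, one_mul,
    add_sub_cancel_left]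
  cases n with
  | zero => simp
  | succ m =>
    rw [← nsmul_right_inj m.add_one_ne_zero, smul_comm, succ_smul_rotheCoeff_succ,
      succ_smul_genBinom_succ, ← two_mul, nsmul_eq_mul]
    push_cast
    ring

theorem map_genBinom {S : Type*} [CommRing S] [BinomialRing S] (f : R →+* S) (m : ℕ) :
    f (genBinom z x m) = genBinom (f z) (f x) m := by
  simp [genBinom, Ring.map_choose]

theorem map_rotheCoeff {S : Type*} [CommRing S] [BinomialRing S] (f : R →+* S) (k : ℕ) :
    f (rotheCoeff z x k) = rotheCoeff (f z) (f x) k := by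
  cases k with
  | zero => simp
  | succ k => simp [rotheCoeff_succ, map_genBinom]

end GenBinom

theorem Polynomial.eval_eq_eval_zero_of_periodic {S : Type*} [CommRing S] [IsDomain S]
    [CharZero S] {p : Polynomial S} (hp : Function.Periodic p.eval 1) (x : S) :
    p.eval x = p.eval 0 := by
  have hC : p = Polynomial.C (p.eval 0) := Polynomial.eq_of_infinite_eval_eq _ _ <|
    Set.infinite_of_injective_forall_mem Nat.cast_injective fun n => by
      simpa using hp.nat_mul_eq n
  rw [hC]
  simp

-- `Module ℚ≥0 S`, unlike `BinomialRing S`, also makes `S[X]` a binomial ring.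
theorem sum_rotheCoeff_mul_genBinom {S : Type*} [CommRing S] [IsDomain S] [CharZero S]
    [Module ℚ≥0 S] (z y x : S) (n : ℕ) :
    ∑ k ∈ range (n + 1), rotheCoeff z x k * genBinom z y (n - k) = genBinom z (x + y) n := by
  induction n generalizing x with
  | zero => simp
  | succ n ih =>
    -- Both sides are polynomial in `x`; their difference is `1`-periodic (Pascal's rule and the
    -- induction hypothesis at `x + z`) and vanishes at `x = 0`.
    let D : S → S := fun x =>
      ∑ k ∈ range (n + 2), rotheCoeff z x k * genBinom z y (n + 1 - k)
        - genBinom z (x + y) (n + 1)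
    let P : Polynomial S :=
      ∑ k ∈ range (n + 2), rotheCoeff (.C z) .X k * genBinom (.C z) (.C y) (n + 1 - k)
        - genBinom (.C z) (.X + .C y) (n + 1)
    have hP : ∀ x, P.eval x = D x := fun x => by
      rw [← Polynomial.coe_evalRingHom]
      simp only [P, D, map_sub, map_sum, map_mul, map_add, map_rotheCoeff, map_genBinom]
      simp
    have hD : Function.Periodic D 1 := fun x => by
      rw [← sub_eq_zero]
      calc D (x + 1) - D x
          = ∑ k ∈ range (n + 2),
              (rotheCoeff z (x + 1) k - rotheCoeff z x k) * genBinom z y (n + 1 - k)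
            - (genBinom z (x + 1 + y) (n + 1) - genBinom z (x + y) (n + 1)) := by
            simp only [D, sub_mul, sum_sub_distrib]
            abel
        _ = ∑ k ∈ range (n + 1), rotheCoeff z (x + z) k * genBinom z y (n - k)
            - genBinom z (x + y + z) n := by
            rw [add_right_comm x 1 y]
            simp [sum_range_succ' _ (n + 1), rotheCoeff_add_one_sub, genBinom_add_one_sub]
        _ = 0 := by rw [ih, add_right_comm, sub_self]
    have hD0 : D 0 = 0 := by
      simp [D, sum_range_succ', rotheCoeff_zero_succ]
    have hPper : Function.Periodic P.eval 1 := fun x => (hP _).trans ((hD x).trans (hP x).symm)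
    have hDx : D x = 0 := by rw [← hP, Polynomial.eval_eq_eval_zero_of_periodic hPper, hP, hD0]
    exact sub_eq_zero.mp hDx

namespace PowerSeries

theorem eq_of_derivative_eq_mul_self {R : Type*} [CommRing R] [IsAddTorsionFree R]
    {F G h : R⟦X⟧} (hF : d⁄dX R F = h * F) (hG : d⁄dX R G = h * G)
    (h0 : constantCoeff F = constantCoeff G) : F = G := by
  ext n
  induction n using Nat.strong_induction_on with
  | _ n ih =>
    cases n with
    | zero => simpa using h0
    | succ n =>
      have hn : coeff n (d⁄dX R F) = coeff n (d⁄dX R G) := by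
        rw [hF, hG, coeff_mul, coeff_mul]
        refine sum_congr rfl fun p hp => ?_
        rw [ih p.2 (Nat.lt_succ_of_le (Finset.HasAntidiagonal.antidiagonal.snd_le hp))]
      rw [coeff_derivative, coeff_derivative, ← Nat.cast_succ, ← nsmul_eq_mul',
        ← nsmul_eq_mul'] at hn
      exact (smul_right_inj n.succ_ne_zero).mp hn

section Exp

variable {R : Type*} [CommRing R] [Algebra ℚ R]

theorem expPS_eq_subst_exp {f : R⟦X⟧} (hf : constantCoeff f = 0) :
    expPS f = (exp R).subst f := by
  ext n
  have hpow : ∀ j, n < j → coeff n (f ^ j) = 0 := fun j hj =>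
    X_pow_dvd_iff.mp (pow_dvd_pow_of_dvd (X_dvd_iff.mpr hf) j) n hj
  rw [expPS, coeff_mk, coeff_subst' (HasSubst.of_constantCoeff_zero' hf),
    finsum_eq_sum_of_support_subset _ (s := range (n + 1)) fun j hj => by
      simp only [Function.mem_support] at hj
      by_contra h
      exact hj (by rw [hpow j (by simpa using h), smul_zero])]
  simp [Algebra.smul_def]

theorem constantCoeff_expPS (f : R⟦X⟧) : constantCoeff (expPS f) = 1 := by
  rw [← coeff_zero_eq_constantCoeff_apply, expPS, coeff_mk]
  simp

theorem derivative_expPS {f : R⟦X⟧} (hf : constantCoeff f = 0) :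
    d⁄dX R (expPS f) = d⁄dX R f * expPS f := by
  rw [expPS_eq_subst_exp hf, derivative_subst (HasSubst.of_constantCoeff_zero' hf),
    derivative_exp, mul_comm]

end Exp

theorem derivative_mk_rotheCoeff {S : Type*} [CommRing S] [IsDomain S] [CharZero S]
    [Module ℚ≥0 S] (z x : S) :
    d⁄dX S (mk (rotheCoeff z x)) = C x * mk (genBinom z (z - 1)) * mk (rotheCoeff z x) := by
  ext n
  rw [coeff_derivative, coeff_mk, mul_assoc, coeff_C_mul, mul_comm (mk _), coeff_mul,
    Nat.sum_antidiagonal_eq_sum_range_succ_mk]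
  simp only [coeff_mk]
  rw [sum_rotheCoeff_mul_genBinom, ← add_sub_assoc, ← succ_smul_rotheCoeff_succ, nsmul_eq_mul',
    Nat.cast_succ]

end PowerSeries

local notation "θ" => (Polynomial.X : Polynomial ℚ)

theorem constantCoeff_phiT : constantCoeff phiT = 0 := by
  rw [← coeff_zero_eq_constantCoeff_apply, phiT, coeff_mk, if_pos rfl]

theorem derivative_phiT : d⁄dX (Polynomial ℚ) phiT = mk (genBinom θ (θ - 1)) := by
  ext n : 1
  have hprod : ∏ a ∈ range (n + 1 - 1), (((n + 1 : ℕ) : Polynomial ℚ) * θ - (a + 1))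
      = ∏ j ∈ range n, (θ - 1 + n * θ - j) :=
    prod_congr (by rw [Nat.add_sub_cancel]) fun j _ => by push_cast; ring
  have hfact : (n.factorial : Polynomial ℚ) * Polynomial.C ((1 : ℚ) / (n + 1).factorial)
      * ((n : Polynomial ℚ) + 1) = 1 := by
    have hq : (n.factorial : ℚ) * (1 / (n + 1).factorial) * (n + 1) = 1 := by
      rw [Nat.factorial_succ]
      push_cast
      field_simp
    simpa using congrArg Polynomial.C hq
  rw [coeff_derivative, phiT, coeff_mk, coeff_mk, if_neg n.succ_ne_zero, hprod, genBinom,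
    ← nsmul_right_inj n.factorial_ne_zero, Ring.factorial_nsmul_choose_eq_prod, nsmul_eq_mul]
  linear_combination (∏ j ∈ range n, (θ - 1 + n * θ - j)) * hfact

theorem expPS_C_mul_phiT (c : Polynomial ℚ) : expPS (C c * phiT) = mk (rotheCoeff θ c) := by
  have hc : constantCoeff (C c * phiT) = 0 := by rw [map_mul, constantCoeff_phiT, mul_zero]
  refine eq_of_derivative_eq_mul_self (h := C c * d⁄dX _ phiT) ?_ ?_ ?_
  · rw [derivative_expPS hc]
    simp
  · rw [derivative_mk_rotheCoeff, derivative_phiT]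
  · rw [constantCoeff_expPS, ← coeff_zero_eq_constantCoeff_apply, coeff_mk,
      rotheCoeff_zero_right]

theorem exp_phi_relation :
    expPS phiT - PowerSeries.X * expPS (PowerSeries.C (R := Polynomial ℚ) Polynomial.X * phiT)
      = 1 := by
  have h1 : expPS phiT = mk (rotheCoeff θ 1) := by simpa using expPS_C_mul_phiT 1
  rw [h1, expPS_C_mul_phiT]
  ext (_ | n)
  · simp
  · simp [coeff_succ_X_mul, rotheCoeff_one_succ]
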